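/- Let à be a real square matrix all of whose eigenvalues have strictly positive real part, and g a vector. Define ψ(t) = (e^{-Ãt})ᵀ g. Then the matrix F = ∫_0^∞ ψ(t) ψ(t)ᵀ dt is finite (the integral converges) and satisfies the Lyapunov equation Ãᵀ F + F Ã = g gᵀ. -/

import Mathlib

/-!
Let `B` be the complexification of `Ãᵀ`. On its generalized eigenspace for an eigenvalue `μ`,
the exponential series of the nilpotent part `B - μ` terminates, so `e^{-tB} v = e^{-tμ} p(t)` with `p` a
polynomial; hence `e^{-tB} v = O(e^{-εt})` for every `ε < Re μ`. The generalized eigenspaces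
span, so `ψ(t) = O(e^{-εt})` for some `ε > 0`, and the entries of `P = ψ ψᵀ` are integrable and
tend to `0`. Since `ψ' = -Ãᵀ ψ`, we have `P' = -(Ãᵀ P + P Ã)`, and integrating over `(0, ∞)` gives
`Ãᵀ F + F Ã = P(0) = g gᵀ`.
-/

open Matrix NormedSpace Filter Asymptotics MeasureTheory
open scoped Norms.Operator Topology

theorem isBigO_pow_mul_exp_neg_mul {a ε : ℝ} (h : ε < a) (i : ℕ) :
    (fun t : ℝ => t ^ i * Real.exp (-a * t)) =O[atTop] fun t => Real.exp (-ε * t) := by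
  have hsplit (t : ℝ) : Real.exp (-ε * t) = Real.exp ((a - ε) * t) * Real.exp (-a * t) := by
    rw [← Real.exp_add]; ring_nf
  simp_rw [hsplit]
  exact (isLittleO_pow_exp_pos_mul_atTop i (sub_pos.2 h)).isBigO.mul (isBigO_refl _ _)

namespace Matrix

variable {n : Type*} [Fintype n] [DecidableEq n]

section GeneralizedEigenspace

variable {R : Type*} [CommRing R] {B : Matrix n n R} {μ : R} {v : n → R}

theorem pow_sub_mulVec_eq_zero_of_mem_maxGenEigenspace
    (hv : v ∈ Module.End.maxGenEigenspace (toLin' B) μ) : ∃ k, (B - μ • 1) ^ k *ᵥ v = 0 := by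
  obtain ⟨k, hk⟩ := (Module.End.mem_maxGenEigenspace _ _ _).1 hv
  refine ⟨k, ?_⟩
  rwa [← toLinAlgEquiv'_apply, map_pow, map_sub, map_smul, map_one]

theorem mem_spectrum_of_mem_maxGenEigenspace
    (hv : v ∈ Module.End.maxGenEigenspace (toLin' B) μ) (hv0 : v ≠ 0) : μ ∈ spectrum R B := by
  have hgen : Module.End.HasUnifEigenvalue (toLin' B) μ ⊤ := (Submodule.ne_bot_iff _).2 ⟨v, hv, hv0⟩
  rw [← spectrum_toLin']
  exact ((Module.End.hasUnifEigenvalue_iff_hasUnifEigenvalue_one (by simp)).1 hgen).mem_spectrum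

theorem spectrum_transpose (B : Matrix n n R) : spectrum R Bᵀ = spectrum R B := by
  ext μ
  simp only [spectrum.mem_iff, isUnit_iff_isUnit_det, Algebra.algebraMap_eq_smul_one]
  rw [← det_transpose (μ • 1 - B), transpose_sub, transpose_smul, transpose_one]

end GeneralizedEigenspace

section Exponential

variable {𝕂 : Type*} [RCLike 𝕂]

theorem exp_mulVec_eq_sum_of_pow_mulVec_eq_zero {X : Matrix n n 𝕂} {v : n → 𝕂} {k : ℕ}
    (hk : X ^ k *ᵥ v = 0) :
    exp X *ᵥ v = ∑ i ∈ Finset.range k, (i.factorial⁻¹ : 𝕂) • (X ^ i *ᵥ v) := by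
  have hsum := (exp_series_hasSum_exp' (𝕂 := 𝕂) X).map (mulVec.addMonoidHomLeft v)
    (continuous_id.matrix_mulVec continuous_const)
  refine hsum.unique (hasSum_sum_of_ne_finset_zero (s := Finset.range k) fun i hi => ?_)
    |>.trans (Finset.sum_congr rfl fun i _ => smul_mulVec _ _ _)
  obtain ⟨j, rfl⟩ := Nat.exists_eq_add_of_le (not_lt.1 (Finset.mem_range.not.1 hi))
  change ((_ : 𝕂) • X ^ (k + j)) *ᵥ v = 0
  rw [smul_mulVec, add_comm, pow_add, ← mulVec_mulVec, hk, mulVec_zero, smul_zero]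

theorem exp_smul_mulVec_eq_of_pow_sub_mulVec_eq_zero {B : Matrix n n 𝕂} {μ : 𝕂} {v : n → 𝕂}
    {k : ℕ} (hk : (B - μ • 1) ^ k *ᵥ v = 0) (s : 𝕂) :
    exp (s • B) *ᵥ v = exp (s * μ) •
      ∑ i ∈ Finset.range k, ((i.factorial⁻¹ : 𝕂) * s ^ i) • ((B - μ • 1) ^ i *ᵥ v) := by
  have hsplit : s • B = algebraMap 𝕂 _ (s * μ) + s • (B - μ • 1) := by
    rw [Algebra.algebraMap_eq_smul_one, smul_sub, smul_smul, add_sub_cancel]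
  have hnil : (s • (B - μ • 1)) ^ k *ᵥ v = 0 := by rw [smul_pow, smul_mulVec, hk, smul_zero]
  have hscalar : exp (algebraMap 𝕂 (Matrix n n 𝕂) (s * μ)) = algebraMap 𝕂 _ (exp (s * μ)) :=
    (algebraMap_exp_comm _).symm
  rw [hsplit, exp_add_of_commute _ _ (Algebra.commute_algebraMap_left _ _), hscalar,
    ← Algebra.smul_def, smul_mulVec, exp_mulVec_eq_sum_of_pow_mulVec_eq_zero hnil]
  simp only [smul_pow, smul_mulVec, smul_smul]

theorem hasDerivAt_exp_smul_mulVec (X : Matrix n n 𝕂) (v : n → 𝕂) (t : 𝕂) :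
    HasDerivAt (fun s : 𝕂 => exp (s • X) *ᵥ v) (X *ᵥ (exp (t • X) *ᵥ v)) t := by
  rw [mulVec_mulVec]
  exact ((mulVecBilin 𝕂 𝕂).flip v).toContinuousLinearMap.hasFDerivAt.comp_hasDerivAt t
    (hasDerivAt_exp_smul_const' X t)

end Exponential

theorem exp_map_ofReal (M : Matrix n n ℝ) :
    (exp M).map Complex.ofReal = exp (M.map Complex.ofReal) :=
  map_exp (Complex.ofRealAm.mapMatrix : Matrix n n ℝ →ₐ[ℝ] Matrix n n ℂ)
    (continuous_id.matrix_map Complex.continuous_ofReal) M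

theorem isBigO_exp_neg_smul_mulVec_of_pow_sub_mulVec_eq_zero {B : Matrix n n ℂ} {μ : ℂ}
    {v : n → ℂ} {k : ℕ} (hk : (B - μ • 1) ^ k *ᵥ v = 0) {ε : ℝ} (hε : ε < μ.re) :
    (fun t : ℝ => exp (-(t • B)) *ᵥ v) =O[atTop] fun t => Real.exp (-ε * t) := by
  have hexpand (t : ℝ) : exp (-(t • B)) *ᵥ v = ∑ i ∈ Finset.range k,
      (Complex.exp (-t * μ) * ((i.factorial⁻¹ : ℂ) * (-t) ^ i)) • ((B - μ • 1) ^ i *ᵥ v) := by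
    rw [← neg_smul, ← Complex.coe_smul, Complex.ofReal_neg,
      exp_smul_mulVec_eq_of_pow_sub_mulVec_eq_zero hk, Finset.smul_sum, ← Complex.exp_eq_exp_ℂ]
    simp only [smul_smul]
  refine (IsBigO.fun_sum fun i _ => ?_).congr_left fun t => (hexpand t).symm
  have hscalar : (fun t : ℝ => Complex.exp (-t * μ) * ((i.factorial⁻¹ : ℂ) * (-t) ^ i))
      =O[atTop] fun t => Real.exp (-ε * t) := by
    refine IsBigO.of_norm_left ?_
    have hnorm (t : ℝ) : ‖Complex.exp (-t * μ) * ((i.factorial⁻¹ : ℂ) * (-t) ^ i)‖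
        = (i.factorial⁻¹ : ℝ) * ‖t ^ i * Real.exp (-μ.re * t)‖ := by
      simp only [norm_mul, Complex.norm_exp, neg_mul, Complex.neg_re, Complex.mul_re,
        Complex.ofReal_re, Complex.ofReal_im, zero_mul, sub_zero, norm_inv, RCLike.norm_natCast,
        norm_pow, norm_neg, Complex.norm_real, Real.norm_eq_abs, abs_of_pos (Real.exp_pos _)]
      ring_nf
    simp_rw [hnorm]
    exact ((isBigO_pow_mul_exp_neg_mul hε i).norm_left).const_mul_left _
  simpa only [smul_eq_mul, mul_one] using
    hscalar.smul (isBigO_const_const ((B - μ • 1) ^ i *ᵥ v) (one_ne_zero (α := ℝ)) atTop)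

theorem isBigO_exp_neg_smul_mulVec {B : Matrix n n ℂ} {ε : ℝ}
    (hε : ∀ μ ∈ spectrum ℂ B, ε < μ.re) (v : n → ℂ) :
    (fun t : ℝ => exp (-(t • B)) *ᵥ v) =O[atTop] fun t => Real.exp (-ε * t) := by
  have hv : v ∈ ⨆ μ, Module.End.maxGenEigenspace (toLin' B) μ := by
    rw [Module.End.iSup_maxGenEigenspace_eq_top]; trivial
  induction hv using Submodule.iSup_induction' with
  | mem μ w hw =>
    rcases eq_or_ne w 0 with rfl | hw0
    · simpa only [mulVec_zero] using isBigO_zero _ _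
    obtain ⟨k, hk⟩ := pow_sub_mulVec_eq_zero_of_mem_maxGenEigenspace hw
    exact isBigO_exp_neg_smul_mulVec_of_pow_sub_mulVec_eq_zero hk
      (hε μ (mem_spectrum_of_mem_maxGenEigenspace hw hw0))
  | zero => simpa only [mulVec_zero] using isBigO_zero _ _
  | add w₁ w₂ _ _ h₁ h₂ => simpa only [mulVec_add] using h₁.add h₂

theorem isBigO_real_exp_neg_smul_mulVec {A : Matrix n n ℝ} {ε : ℝ}
    (hε : ∀ μ ∈ spectrum ℂ (A.map Complex.ofReal), ε < μ.re) (v : n → ℝ) :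
    (fun t : ℝ => exp (-(t • A)) *ᵥ v) =O[atTop] fun t => Real.exp (-ε * t) := by
  have hcomplex := isBigO_pi.1 (isBigO_exp_neg_smul_mulVec hε (Complex.ofReal ∘ v))
  refine isBigO_pi.2 fun i => Complex.isBigO_ofReal_left.1 ((hcomplex i).congr_left fun t => ?_)
  have hmap : (-(t • A)).map Complex.ofReal = -(t • A.map Complex.ofReal) := by
    ext; simp
  rw [← hmap, ← exp_map_ofReal]
  exact (Complex.ofRealHom.map_mulVec _ _ _).symm

theorem exists_pos_lt_re_of_forall_mem_spectrum {B : Matrix n n ℂ}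
    (hB : ∀ μ ∈ spectrum ℂ B, 0 < μ.re) : ∃ ε > 0, ∀ μ ∈ spectrum ℂ B, ε < μ.re := by
  have hsmall : ∀ᶠ ε in 𝓝[>] (0 : ℝ), ∀ μ ∈ spectrum ℂ B, ε < μ.re :=
    (eventually_all_finite B.finite_spectrum).2 fun μ hμ =>
      nhdsWithin_le_nhds (eventually_lt_nhds (hB μ hμ))
  exact (hsmall.and self_mem_nhdsWithin).exists.imp fun ε h => ⟨h.2, h.1⟩

end Matrix

section Lyapunov

variable {n : Type*} [Fintype n]

theorem integrable_mul_add_mul_apply {α : Type*} [MeasurableSpace α] {μ : Measure α}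
    {P : α → Matrix n n ℝ} (hP : ∀ i j, Integrable (fun a => P a i j) μ) (B C : Matrix n n ℝ)
    (i j : n) : Integrable (fun a => (B * P a + P a * C) i j) μ :=
  (integrable_finsetSum _ fun k _ => (hP k j).const_mul _).add
    (integrable_finsetSum _ fun k _ => (hP i k).mul_const _)

theorem integral_mul_add_mul_apply {α : Type*} [MeasurableSpace α] {μ : Measure α}
    {P : α → Matrix n n ℝ} (hP : ∀ i j, Integrable (fun a => P a i j) μ)
    {F : Matrix n n ℝ} (hF : ∀ i j, F i j = ∫ a, P a i j ∂μ) (B C : Matrix n n ℝ) (i j : n) :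
    ∫ a, (B * P a + P a * C) i j ∂μ = (B * F + F * C) i j := by
  simp only [Matrix.add_apply, mul_apply, hF]
  rw [integral_add (integrable_finsetSum _ fun k _ => (hP k j).const_mul _)
      (integrable_finsetSum _ fun k _ => (hP i k).mul_const _),
    integral_finsetSum _ fun k _ => (hP k j).const_mul _,
    integral_finsetSum _ fun k _ => (hP i k).mul_const _]
  simp only [integral_const_mul, integral_mul_const]

theorem hasDerivAt_apply_mul_apply {A : Matrix n n ℝ} {ψ : ℝ → n → ℝ} {t : ℝ}
    (hψ : HasDerivAt ψ (-(Aᵀ *ᵥ ψ t)) t) (i j : n) :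
    HasDerivAt (fun s => ψ s i * ψ s j)
      (-(Aᵀ * vecMulVec (ψ t) (ψ t) + vecMulVec (ψ t) (ψ t) * A) i j) t := by
  refine ((hasDerivAt_pi.1 hψ i).fun_mul (hasDerivAt_pi.1 hψ j)).congr_deriv ?_
  rw [mul_vecMulVec, vecMulVec_mul, ← mulVec_transpose]
  simp only [Pi.neg_apply, Matrix.add_apply, vecMulVec_apply]
  ring

theorem isBigO_apply_mul_apply {ψ : ℝ → n → ℝ} {ε : ℝ}
    (hψ : ψ =O[atTop] fun t => Real.exp (-ε * t)) (i j : n) :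
    (fun t => ψ t i * ψ t j) =O[atTop] fun t => Real.exp (-(2 * ε) * t) := by
  refine ((isBigO_pi.1 hψ i).mul (isBigO_pi.1 hψ j)).congr (fun t => rfl) fun t => ?_
  rw [← Real.exp_add]
  ring_nf

theorem lyapunov_of_hasDerivAt_of_isBigO {A : Matrix n n ℝ} {ψ : ℝ → n → ℝ}
    (hψ : ∀ t, HasDerivAt ψ (-(Aᵀ *ᵥ ψ t)) t) {ε : ℝ} (hε : 0 < ε)
    (hdecay : ψ =O[atTop] fun t => Real.exp (-ε * t)) {F : Matrix n n ℝ}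
    (hF : ∀ i j, F i j = ∫ t in Set.Ioi 0, ψ t i * ψ t j) :
    (∀ i j, IntegrableOn (fun t => ψ t i * ψ t j) (Set.Ioi 0)) ∧
      Aᵀ * F + F * A = vecMulVec (ψ 0) (ψ 0) := by
  have hcont : Continuous ψ := continuous_iff_continuousAt.2 fun t => (hψ t).continuousAt
  have hprod_cont (i j : n) : Continuous fun t => ψ t i * ψ t j := by fun_prop
  have hint (i j : n) : IntegrableOn (fun t => ψ t i * ψ t j) (Set.Ioi 0) :=
    integrable_of_isBigO_exp_neg (by positivity) (hprod_cont i j).continuousOn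
      (isBigO_apply_mul_apply hdecay i j)
  have hlim (i j : n) : Tendsto (fun t => ψ t i * ψ t j) atTop (𝓝 0) :=
    (isBigO_apply_mul_apply hdecay i j).trans_tendsto <| Real.tendsto_exp_atBot.comp <|
      tendsto_id.const_mul_atTop_of_neg (by linarith)
  refine ⟨hint, ext fun i j => ?_⟩
  have hftc := integral_Ioi_of_hasDerivAt_of_tendsto (hprod_cont i j).continuousWithinAt
    (fun t _ => hasDerivAt_apply_mul_apply (hψ t) i j)
    (integrable_mul_add_mul_apply hint Aᵀ A i j).neg (hlim i j)
  rw [integral_neg,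
    integral_mul_add_mul_apply (P := fun t => vecMulVec (ψ t) (ψ t)) hint hF] at hftc
  rw [vecMulVec_apply]
  linarith

end Lyapunov

/-- If all eigenvalues of `Ã` have strictly positive real part and
`ψ(t) = (e^{-Ãt})ᵀ g`, then the integral `F = ∫_0^∞ ψ(t)ψ(t)ᵀ dt` converges
(entrywise) and solves the Lyapunov equation `Ãᵀ F + F Ã = g gᵀ`. -/
theorem lyapunov_integral
    (d : ℕ) (A : Matrix (Fin d) (Fin d) ℝ)
    (hA : ∀ μ ∈ spectrum ℂ (A.map (Complex.ofReal)), 0 < μ.re)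
    (g : Fin d → ℝ)
    (psi : ℝ → Fin d → ℝ)
    (hpsi : ∀ t, psi t = (NormedSpace.exp (-(t • A)))ᵀ.mulVec g)
    (F : Matrix (Fin d) (Fin d) ℝ)
    (hF : ∀ i j, F i j = ∫ t in Set.Ioi (0 : ℝ), psi t i * psi t j) :
    (∀ i j, MeasureTheory.IntegrableOn (fun t => psi t i * psi t j) (Set.Ioi (0 : ℝ))) ∧
    Aᵀ * F + F * A = Matrix.vecMulVec g g := by
  have hψ : psi = fun t => exp (t • -Aᵀ) *ᵥ g := funext fun t => by
    rw [hpsi, ← exp_transpose, transpose_neg, transpose_smul, smul_neg]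
  subst hψ
  obtain ⟨ε, hε, hlt⟩ := exists_pos_lt_re_of_forall_mem_spectrum hA
  have hdecay := isBigO_real_exp_neg_smul_mulVec (A := Aᵀ)
    (by rwa [transpose_map, spectrum_transpose]) g
  simpa only [zero_smul, neg_zero, exp_zero, one_mulVec] using lyapunov_of_hasDerivAt_of_isBigO
    (fun t => (hasDerivAt_exp_smul_mulVec (-Aᵀ) g t).congr_deriv (neg_mulVec _ _)) hε
    (hdecay.congr_left fun t => by rw [smul_neg]) hF
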